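/- arXiv:2106.04458 — 5 statements merged into one kernel-verified Lean document; each statement's English description precedes it below -/
import Mathlib

section
/- For every real p > 1 there exists a constant C = C(p) > 0 such that for all vectors a, b in ℝ^N, ⟨|a|^{p-2} a − |b|^{p-2} b, a − b⟩ ≥ C |a−b|² / (|a|+|b|)^{2−p}, where the right-hand side is interpreted as 0 when a = b = 0. -/
/-!
With `A = ‖a‖`, `B = ‖b‖` and `t = ⟪a, b⟫`, both sides are affine in `t`, which ranges over
`[-A * B, A * B]` by Cauchy–Schwarz, so it suffices to check the two endpoints. At `t = A * B`
the inequality reads `(A ^ (p-1) - B ^ (p-1)) * (A - B) ≥ C * (A - B) ^ 2 * (A + B) ^ (p-2)`,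
which follows from the tangent line of the concave `x ↦ x ^ (p-1)` when `p ≤ 2` and from
`A ^ (p-2) ≥ ((A + B) / 2) ^ (p-2)` when `p ≥ 2`. At `t = -A * B` it reads
`A ^ (p-1) + B ^ (p-1) ≥ C * (A + B) ^ (p-1)`, since `max A B ≥ (A + B) / 2`.
Both hold with `C = min (p - 1) (2 ^ (1 - p))`.
-/

open Real

namespace Real

theorem rpow_sub_one_mul_self {x q : ℝ} (hx : 0 ≤ x) (hq : q ≠ 0) : x ^ (q - 1) * x = x ^ q := by
  rw [← rpow_add_one' hx (by simpa using hq), sub_add_cancel]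

theorem add_rpow_le_two_rpow_mul_add_rpow {A B q : ℝ} (hA : 0 ≤ A) (hB : 0 ≤ B) (hq : 0 ≤ q) :
    (A + B) ^ q ≤ 2 ^ q * (A ^ q + B ^ q) := by
  wlog hBA : B ≤ A generalizing A B
  · simpa only [add_comm] using this hB hA (le_of_not_ge hBA)
  calc (A + B) ^ q ≤ (2 * A) ^ q := by gcongr; linarith
    _ = 2 ^ q * A ^ q := mul_rpow zero_le_two hA
    _ ≤ 2 ^ q * (A ^ q + B ^ q) := by gcongr; exact le_add_of_nonneg_right (by positivity)

theorem mul_rpow_sub_one_mul_sub_le_rpow_sub_rpow {A B q : ℝ} (hA : 0 < A) (hB : 0 ≤ B)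
    (hq₀ : 0 ≤ q) (hq₁ : q ≤ 1) : q * A ^ (q - 1) * (A - B) ≤ A ^ q - B ^ q := by
  have amgm : B ^ q * A ^ (1 - q) ≤ q * B + (1 - q) * A :=
    geom_mean_le_arith_mean2_weighted hq₀ (sub_nonneg.2 hq₁) hB hA.le (by ring)
  have hAq : A ^ (1 - q) * A ^ (q - 1) = 1 := by
    rw [← rpow_add hA, show 1 - q + (q - 1) = 0 by ring, rpow_zero]
  have hA1 : A ^ (q - 1) * A = A ^ q := by
    rw [← rpow_add_one hA.ne', sub_add_cancel]
  have := mul_le_mul_of_nonneg_right amgm (rpow_nonneg hA.le (q - 1))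
  rw [mul_assoc, hAq, mul_one] at this
  nlinarith

theorem rpow_sub_one_mul_sub_le_rpow_sub_rpow {A B q : ℝ} (hB : 0 ≤ B) (hBA : B ≤ A)
    (hq : 1 ≤ q) : A ^ (q - 1) * (A - B) ≤ A ^ q - B ^ q := by
  have hq0 : q ≠ 0 := by positivity
  have : B ^ (q - 1) * B ≤ A ^ (q - 1) * B := by gcongr
  rw [rpow_sub_one_mul_self hB hq0] at this
  nlinarith [rpow_sub_one_mul_self (hB.trans hBA) hq0]

theorem mul_sq_mul_rpow_le_rpow_sub_rpow_mul_sub {A B q c : ℝ} (hA : 0 ≤ A) (hB : 0 ≤ B)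
    (hq : 0 < q) (hcq : c ≤ q) (hc : c ≤ 2 ^ (1 - q)) :
    c * (A - B) ^ 2 * (A + B) ^ (q - 1) ≤ (A ^ q - B ^ q) * (A - B) := by
  wlog hBA : B ≤ A generalizing A B
  · have := this hB hA (le_of_not_ge hBA)
    rw [add_comm] at this
    linarith
  rcases hA.eq_or_lt with rfl | hA
  · obtain rfl : B = 0 := le_antisymm hBA hB
    simp
  suffices c * (A + B) ^ (q - 1) * (A - B) ≤ A ^ q - B ^ q by
    nlinarith [mul_le_mul_of_nonneg_right this (sub_nonneg.2 hBA)]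
  rcases le_total q 1 with hq1 | hq1
  · have hdecr : (A + B) ^ (q - 1) ≤ A ^ (q - 1) :=
      rpow_le_rpow_of_nonpos hA (by linarith) (by linarith)
    calc c * (A + B) ^ (q - 1) * (A - B) ≤ q * A ^ (q - 1) * (A - B) := by
          have := sub_nonneg.2 hBA
          gcongr
      _ ≤ A ^ q - B ^ q := mul_rpow_sub_one_mul_sub_le_rpow_sub_rpow hA hB hq.le hq1
  · have hdouble : (A + B) ^ (q - 1) ≤ 2 ^ (q - 1) * A ^ (q - 1) := by
      rw [← mul_rpow zero_le_two hA.le]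
      gcongr
      linarith
    calc c * (A + B) ^ (q - 1) * (A - B)
        ≤ 2 ^ (1 - q) * (2 ^ (q - 1) * A ^ (q - 1)) * (A - B) := by
          have := sub_nonneg.2 hBA
          gcongr
      _ = A ^ (q - 1) * (A - B) := by
          rw [← mul_assoc, ← rpow_add zero_lt_two, show 1 - q + (q - 1) = 0 by ring, rpow_zero,
            one_mul]
      _ ≤ A ^ q - B ^ q := rpow_sub_one_mul_sub_le_rpow_sub_rpow hB hBA hq1

theorem mul_sq_mul_rpow_le_of_abs_le {A B t q c : ℝ} (hA : 0 ≤ A) (hB : 0 ≤ B) (ht : |t| ≤ A * B)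
    (hq : 0 < q) (hcq : c ≤ q) (hc : c ≤ 2 ^ (-q)) :
    c * (A ^ 2 - 2 * t + B ^ 2) * (A + B) ^ (q - 1) ≤
      A ^ (q - 1) * (A ^ 2 - t) + B ^ (q - 1) * (B ^ 2 - t) := by
  set M := (A + B) ^ (q - 1)
  have hAB : 0 ≤ A + B := add_nonneg hA hB
  have fA := rpow_sub_one_mul_self hA hq.ne'
  have fB := rpow_sub_one_mul_self hB hq.ne'
  have fM : M * (A + B) = (A + B) ^ q := rpow_sub_one_mul_self hAB hq.ne'
  have hE₁ : c * (A - B) ^ 2 * M ≤ (A ^ q - B ^ q) * (A - B) :=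
    mul_sq_mul_rpow_le_rpow_sub_rpow_mul_sub hA hB hq hcq
      (hc.trans (rpow_le_rpow_of_exponent_le one_le_two (by linarith)))
  have hE₂ : c * (A + B) ^ 2 * M ≤ (A ^ q + B ^ q) * (A + B) := by
    have h2q : (2 : ℝ) ^ (-q) * 2 ^ q = 1 := by
      rw [← rpow_add zero_lt_two, neg_add_cancel, rpow_zero]
    have : c * (A + B) ^ q ≤ A ^ q + B ^ q :=
      calc c * (A + B) ^ q ≤ 2 ^ (-q) * (2 ^ q * (A ^ q + B ^ q)) := by
            gcongr
            exact add_rpow_le_two_rpow_mul_add_rpow hA hB hq.le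
        _ = A ^ q + B ^ q := by rw [← mul_assoc, h2q, one_mul]
    calc c * (A + B) ^ 2 * M = c * (A + B) ^ q * (A + B) := by rw [← fM]; ring
      _ ≤ (A ^ q + B ^ q) * (A + B) := by gcongr
  obtain ⟨ht₁, ht₂⟩ := abs_le.1 ht
  -- both sides are affine in `t`, so the endpoint cases `t = ± A * B` suffice
  rcases le_total (2 * c * M) (A ^ (q - 1) + B ^ (q - 1)) with hs | hs
  · nlinarith [mul_nonneg (sub_nonneg.2 hs) (sub_nonneg.2 ht₂)]
  · nlinarith [mul_nonneg (sub_nonneg.2 hs) (neg_le_iff_add_nonneg.1 ht₁)]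

end Real

section InnerProductSpace

variable {E : Type*} [NormedAddCommGroup E] [InnerProductSpace ℝ E]

theorem inner_rpow_smul_sub_rpow_smul_sub (a b : E) (r : ℝ) :
    inner ℝ (‖a‖ ^ r • a - ‖b‖ ^ r • b) (a - b) =
      ‖a‖ ^ r * (‖a‖ ^ 2 - inner ℝ a b) + ‖b‖ ^ r * (‖b‖ ^ 2 - inner ℝ a b) := by
  simp only [inner_sub_left, inner_sub_right, real_inner_smul_left, real_inner_self_eq_norm_sq,
    real_inner_comm a b]
  ring

theorem mul_norm_sub_sq_div_le_inner_rpow_smul_sub {p c : ℝ} (hp : 1 < p) (hcp : c ≤ p - 1)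
    (hc : c ≤ 2 ^ (1 - p)) (a b : E) :
    c * ‖a - b‖ ^ 2 / (‖a‖ + ‖b‖) ^ (2 - p) ≤
      inner ℝ (‖a‖ ^ (p - 2) • a - ‖b‖ ^ (p - 2) • b) (a - b) := by
  have key := mul_sq_mul_rpow_le_of_abs_le (norm_nonneg a) (norm_nonneg b)
    (abs_real_inner_le_norm a b) (q := p - 1) (by linarith) hcp (by rwa [neg_sub])
  rw [show p - 1 - 1 = p - 2 by ring] at key
  rwa [div_eq_mul_inv, ← rpow_neg (by positivity), neg_sub, inner_rpow_smul_sub_rpow_smul_sub,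
    norm_sub_sq_real]

end InnerProductSpace

theorem stmt0 (p : ℝ) (hp : 1 < p) :
    ∃ C : ℝ, 0 < C ∧ ∀ (N : ℕ) (a b : EuclideanSpace ℝ (Fin N)),
      C * ‖a - b‖ ^ 2 / (‖a‖ + ‖b‖) ^ (2 - p) ≤
        (inner ℝ ((‖a‖ ^ (p - 2)) • a - (‖b‖ ^ (p - 2)) • b) (a - b) : ℝ) :=
  ⟨min (p - 1) (2 ^ (1 - p)), lt_min (by linarith) (by positivity), fun _ a b =>
    mul_norm_sub_sq_div_le_inner_rpow_smul_sub hp (min_le_left _ _) (min_le_right _ _) a b⟩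
end

section
/- Let 1 < p < ∞ and let g : ℝ → ℝ be an increasing differentiable function. Define G(t) = ∫₀ᵗ g'(τ)^{1/p} dτ. Then for every a, b ∈ ℝ, |a−b|^{p-2} (a−b) (g(a) − g(b)) ≥ |G(a) − G(b)|^p. -/
open MeasureTheory Set intervalIntegral
open scoped ENNReal Interval

/-!
Write `G a - G b = ∫_b^a (g')^(1/p)` and `g a - g b = ∫_b^a g'` (fundamental theorem of calculus;
`g'` is nonnegative, hence integrable). For `b ≤ a` the inequality is Hölder's inequality for
`(g')^(1/p) · 1` on `[b, a]` with exponents `p` and `p / (p - 1)`, raised to the `p`-th power; the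
factor `|a - b| ^ (p - 2) * (a - b)` makes both sides symmetric in `a` and `b`.
-/

lemma MeasureTheory.Integrable.memLp_rpow_one_div {α : Type*} [MeasurableSpace α] {μ : Measure α}
    {f : α → ℝ} {p : ℝ} (hp : 0 < p) (hf : Integrable f μ) (hf0 : 0 ≤ f) :
    MemLp (fun x => f x ^ (1 / p)) (ENNReal.ofReal p) μ := by
  have h := (memLp_one_iff_integrable.mpr hf).norm_rpow_div (ENNReal.ofReal (1 / p))
  rw [ENNReal.toReal_ofReal (by positivity), one_div (ENNReal.ofReal _),
    ← ENNReal.ofReal_inv_of_pos (by positivity), one_div, inv_inv] at h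
  simpa only [Real.norm_of_nonneg (hf0 _), one_div] using h

lemma IntervalIntegrable.rpow_one_div {f : ℝ → ℝ} {p a b : ℝ} (hp : 1 ≤ p)
    (hf : IntervalIntegrable f volume a b) (hf0 : 0 ≤ f) :
    IntervalIntegrable (fun x => f x ^ (1 / p)) volume a b := by
  rw [intervalIntegrable_iff] at hf ⊢
  have : IsFiniteMeasure (volume.restrict (Ι a b)) :=
    isFiniteMeasure_restrict.2 measure_Ioc_lt_top.ne
  exact (hf.memLp_rpow_one_div (by linarith) hf0).integrable (by simpa using hp)

lemma integral_rpow_one_div_rpow_le {f : ℝ → ℝ} {p a b : ℝ} (hp : 1 < p) (hab : a ≤ b)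
    (hf : IntervalIntegrable f volume a b) (hf0 : 0 ≤ f) :
    (∫ x in a..b, f x ^ (1 / p)) ^ p ≤ (b - a) ^ (p - 1) * ∫ x in a..b, f x := by
  have : IsFiniteMeasure (volume.restrict (Ioc a b)) :=
    isFiniteMeasure_restrict.2 measure_Ioc_lt_top.ne
  have hp0 : 0 < p := by linarith
  have hpq := Real.HolderConjugate.conjExponent hp
  have hHolder := integral_mul_le_Lp_mul_Lq_of_nonneg hpq
    (.of_forall fun x => Real.rpow_nonneg (hf0 x) _) (.of_forall fun _ => zero_le_one)
    (hf.1.memLp_rpow_one_div hp0 hf0) (memLp_const (1 : ℝ))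
  have hcancel : ∀ x, (f x ^ (1 / p)) ^ p = f x := fun x => by
    rw [← Real.rpow_mul (hf0 x), one_div_mul_cancel hp0.ne', Real.rpow_one]
  simp only [mul_one, hcancel, Real.one_rpow, MeasureTheory.integral_const, smul_eq_mul,
    measureReal_restrict_apply_univ, Real.volume_real_Ioc_of_le hab] at hHolder
  rw [integral_of_le hab, integral_of_le hab]
  have hba : 0 ≤ b - a := sub_nonneg.2 hab
  have hint : 0 ≤ ∫ x in Ioc a b, f x := integral_nonneg hf0
  calc (∫ x in Ioc a b, f x ^ (1 / p)) ^ p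
      ≤ ((∫ x in Ioc a b, f x) ^ (1 / p) * (b - a) ^ (1 / p.conjExponent)) ^ p :=
        Real.rpow_le_rpow (integral_nonneg fun x => Real.rpow_nonneg (hf0 x) _) hHolder hp0.le
    _ = (b - a) ^ (p - 1) * ∫ x in Ioc a b, f x := by
        rw [Real.mul_rpow (by positivity) (by positivity), ← Real.rpow_mul hint,
          one_div_mul_cancel hp0.ne', Real.rpow_one, ← Real.rpow_mul hba, mul_comm]
        congr 2
        rw [Real.conjExponent]
        field_simp

lemma abs_integral_rpow_one_div_rpow_le {f : ℝ → ℝ} {p a b : ℝ} (hp : 1 < p)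
    (hf : IntervalIntegrable f volume b a) (hf0 : 0 ≤ f) :
    |∫ x in b..a, f x ^ (1 / p)| ^ p ≤ |a - b| ^ (p - 2) * (a - b) * ∫ x in b..a, f x := by
  have of_le : ∀ {a b}, b ≤ a → IntervalIntegrable f volume b a →
      |∫ x in b..a, f x ^ (1 / p)| ^ p ≤ |a - b| ^ (p - 2) * (a - b) * ∫ x in b..a, f x := by
    intro a b hba hf
    rw [abs_of_nonneg (integral_nonneg hba fun x _ => Real.rpow_nonneg (hf0 x) _),
      abs_of_nonneg (sub_nonneg.2 hba), ← Real.rpow_add_one' (sub_nonneg.2 hba) (by linarith)]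
    convert integral_rpow_one_div_rpow_le hp hba hf hf0 using 3
    ring
  rcases le_total b a with hba | hab
  · exact of_le hba hf
  · rw [abs_sub_comm a b, integral_symm, integral_symm a, abs_neg]
    convert of_le hab hf.symm using 1
    ring

lemma Monotone.intervalIntegrable_deriv {g : ℝ → ℝ} (hg : Monotone g) (hgd : Differentiable ℝ g)
    (a b : ℝ) : IntervalIntegrable (deriv g) volume a b :=
  intervalIntegrable_deriv_of_nonneg hgd.continuous.continuousOn
    (fun x _ => (hgd x).hasDerivAt) (fun _ _ => hg.deriv_nonneg)

theorem stmt1 (p : ℝ) (hp : 1 < p) (g : ℝ → ℝ) (hgmono : Monotone g)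
    (hgdiff : Differentiable ℝ g) (G : ℝ → ℝ)
    (hG : ∀ t : ℝ, G t = ∫ τ in (0:ℝ)..t, (deriv g τ) ^ (1 / p)) (a b : ℝ) :
    |G a - G b| ^ p ≤ |a - b| ^ (p - 2) * (a - b) * (g a - g b) := by
  have hg'0 : 0 ≤ deriv g := fun _ => hgmono.deriv_nonneg
  have hg' := hgmono.intervalIntegrable_deriv hgdiff
  have hGab : G a - G b = ∫ τ in b..a, deriv g τ ^ (1 / p) := by
    rw [hG, hG, integral_interval_sub_left ((hg' 0 a).rpow_one_div hp.le hg'0)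
      ((hg' 0 b).rpow_one_div hp.le hg'0)]
  have hgab : g a - g b = ∫ τ in b..a, deriv g τ :=
    (integral_deriv_eq_sub (fun x _ => hgdiff x) (hg' b a)).symm
  rw [hGab, hgab]
  exact abs_integral_rpow_one_div_rpow_le hp (hg' b a) hg'0
end

section
/- Let 1 < p < ∞, 0 < δ < 1, and let X be a uniformly convex Banach space with norm ‖·‖ whose p-th power is strictly convex. Suppose u ∈ X minimizes I(v) = (1/p)‖v‖^p − (1/(1−δ)) Φ(v) over X, where Φ is positively homogeneous of degree 1−δ and Φ(u) = ‖u‖^p. Then for every v ∈ X with Φ(v) = 1, ‖u‖^{p(1−δ−p)/(1−δ)} ≤ ‖v‖^p, with equality attained at V = Φ(u)^{-1/(1-δ)} u. -/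
/-!
Write `q = 1 - δ`, so `0 < q < p`. For `Φ v = 1`, the rescaling `λ = ‖v‖ ^ (-p / (p - q))` balances
`‖λ • v‖ ^ p = Φ (λ • v) = λ ^ q`, which is exactly the relation `Φ u = ‖u‖ ^ p` satisfied by `u`.
On such balanced points the energy is `(1/p - 1/q) ‖·‖ ^ p` with a negative coefficient, so
minimality of `u` gives `λ ^ q ≤ ‖u‖ ^ p`; raising to the negative power `(q - p) / q` turns this
into `‖u‖ ^ (p (q - p) / q) ≤ ‖v‖ ^ p`. The value at `Φ u ^ (-1/q) • u` is a direct computation.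
-/

open Real

theorem map_zero_of_rpow_homogeneous {E : Type*} [AddCommGroup E] [Module ℝ E] {Φ : E → ℝ}
    {q : ℝ} (hq : 0 < q) (hΦ : ∀ c : ℝ, 0 < c → ∀ v : E, Φ (c • v) = c ^ q * Φ v) :
    Φ 0 = 0 := by
  have h2 := hΦ 2 two_pos 0
  rw [smul_zero] at h2
  have hfactor : (2 ^ q - 1) * Φ 0 = 0 := by linear_combination -h2
  exact (mul_eq_zero.1 hfactor).resolve_left (sub_ne_zero.2 (one_lt_rpow one_lt_two hq).ne')

section Energy

variable {X : Type*} [NormedAddCommGroup X]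

noncomputable def energy (p q : ℝ) (Φ : X → ℝ) (v : X) : ℝ := 1 / p * ‖v‖ ^ p - 1 / q * Φ v

variable {p q : ℝ} {Φ : X → ℝ}

theorem energy_eq_of_map_eq {u : X} (hΦu : Φ u = ‖u‖ ^ p) :
    energy p q Φ u = (1 / p - 1 / q) * ‖u‖ ^ p := by
  rw [energy, hΦu]
  ring

variable [NormedSpace ℝ X]

theorem energy_smul_of_map_eq_one (hpq : p ≠ q)
    (hΦ : ∀ c : ℝ, 0 < c → ∀ v : X, Φ (c • v) = c ^ q * Φ v) {v : X} (hv : Φ v = 1)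
    (hv0 : v ≠ 0) :
    energy p q Φ (‖v‖ ^ (-p / (p - q)) • v) = (1 / p - 1 / q) * ‖v‖ ^ (-(p * q) / (p - q)) := by
  have hnorm : 0 < ‖v‖ := norm_pos_iff.2 hv0
  have hscale : 0 < ‖v‖ ^ (-p / (p - q)) := rpow_pos_of_pos hnorm _
  have hpow : (‖v‖ ^ (-p / (p - q)) * ‖v‖) ^ p = ‖v‖ ^ (-(p * q) / (p - q)) := by
    rw [← rpow_add_one hnorm.ne', ← rpow_mul hnorm.le]
    congr 1
    field_simp
    ring
  have hΦscale : (‖v‖ ^ (-p / (p - q))) ^ q = ‖v‖ ^ (-(p * q) / (p - q)) := by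
    rw [← rpow_mul hnorm.le]
    congr 1
    ring
  rw [energy, norm_smul, norm_of_nonneg hscale.le, hpow, hΦ _ hscale, hv, mul_one, hΦscale]
  ring

theorem norm_rpow_le_of_isMinimizer (hq : 0 < q) (hqp : q < p)
    (hΦ : ∀ c : ℝ, 0 < c → ∀ v : X, Φ (c • v) = c ^ q * Φ v) {u : X} (hΦu : Φ u = ‖u‖ ^ p)
    (hmin : ∀ v : X, energy p q Φ u ≤ energy p q Φ v) {v : X} (hv : Φ v = 1) :
    ‖u‖ ^ (p * (q - p) / q) ≤ ‖v‖ ^ p := by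
  have hv0 : v ≠ 0 := by
    rintro rfl
    rw [map_zero_of_rpow_homogeneous hq hΦ] at hv
    exact zero_ne_one hv
  have hbalanced : ‖v‖ ^ (-(p * q) / (p - q)) ≤ ‖u‖ ^ p := by
    have hcoef : 1 / p - 1 / q < 0 := sub_neg.2 (one_div_lt_one_div_of_lt hq hqp)
    have h := hmin (‖v‖ ^ (-p / (p - q)) • v)
    rw [energy_eq_of_map_eq hΦu, energy_smul_of_map_eq_one hqp.ne' hΦ hv hv0] at h
    exact (mul_le_mul_left_of_neg hcoef).1 h
  have hexp : (q - p) / q ≤ 0 := div_nonpos_of_nonpos_of_nonneg (by linarith) hq.le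
  calc ‖u‖ ^ (p * (q - p) / q) = (‖u‖ ^ p) ^ ((q - p) / q) := by
        rw [← rpow_mul (norm_nonneg u), mul_div_assoc]
    _ ≤ (‖v‖ ^ (-(p * q) / (p - q))) ^ ((q - p) / q) :=
        rpow_le_rpow_of_nonpos (rpow_pos_of_pos (norm_pos_iff.2 hv0) _) hbalanced hexp
    _ = ‖v‖ ^ p := by
        rw [← rpow_mul (norm_nonneg v)]
        congr 1
        field_simp [sub_ne_zero.2 hqp.ne']
        ring

theorem norm_rpow_smul_self_rpow (hq : q ≠ 0) (hpq : p ≠ q) (u : X) :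
    ‖(‖u‖ ^ p) ^ (-1 / q) • u‖ ^ p = ‖u‖ ^ (p * (q - p) / q) := by
  have hexp : p * (-1 / q) + 1 ≠ 0 := by
    field_simp
    rw [neg_add_eq_sub]
    exact div_ne_zero (sub_ne_zero.2 hpq.symm) hq
  rw [norm_smul, norm_of_nonneg (rpow_nonneg (rpow_nonneg (norm_nonneg u) _) _),
    ← rpow_mul (norm_nonneg u), ← rpow_add_one' (norm_nonneg u) hexp, ← rpow_mul (norm_nonneg u)]
  congr 1
  field_simp
  ring

end Energy

theorem stmt9_general (p δ : ℝ) (hp : 1 < p) (hδ0 : 0 < δ) (hδ1 : δ < 1)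
    {X : Type*} [NormedAddCommGroup X] [NormedSpace ℝ X]
    (Φ : X → ℝ) (hhom : ∀ c : ℝ, 0 < c → ∀ v : X, Φ (c • v) = c ^ (1 - δ) * Φ v)
    (u : X) (hΦu : Φ u = ‖u‖ ^ p)
    (hmin : ∀ v : X, (1 / p) * ‖u‖ ^ p - (1 / (1 - δ)) * Φ u ≤
      (1 / p) * ‖v‖ ^ p - (1 / (1 - δ)) * Φ v) :
    (∀ v : X, Φ v = 1 → ‖u‖ ^ (p * (1 - δ - p) / (1 - δ)) ≤ ‖v‖ ^ p) ∧
      ‖(Φ u ^ (-1 / (1 - δ))) • u‖ ^ p = ‖u‖ ^ (p * (1 - δ - p) / (1 - δ)) := by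
  have hq : 0 < 1 - δ := sub_pos.2 hδ1
  have hqp : 1 - δ < p := by linarith
  refine ⟨fun v hv => norm_rpow_le_of_isMinimizer hq hqp hhom hΦu hmin hv, ?_⟩
  rw [hΦu]
  exact norm_rpow_smul_self_rpow hq.ne' hqp.ne' u

theorem stmt9 (p δ : ℝ) (hp : 1 < p) (hδ0 : 0 < δ) (hδ1 : δ < 1)
    {X : Type*} [NormedAddCommGroup X] [NormedSpace ℝ X] [UniformConvexSpace X]
    [CompleteSpace X]
    (hconv : StrictConvexOn ℝ Set.univ (fun v : X => ‖v‖ ^ p))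
    (Φ : X → ℝ) (hhom : ∀ c : ℝ, 0 < c → ∀ v : X, Φ (c • v) = c ^ (1 - δ) * Φ v)
    (u : X) (hΦu : Φ u = ‖u‖ ^ p)
    (hmin : ∀ v : X, (1 / p) * ‖u‖ ^ p - (1 / (1 - δ)) * Φ u ≤
      (1 / p) * ‖v‖ ^ p - (1 / (1 - δ)) * Φ v) :
    (∀ v : X, Φ v = 1 → ‖u‖ ^ (p * (1 - δ - p) / (1 - δ)) ≤ ‖v‖ ^ p) ∧
      ‖(Φ u ^ (-1 / (1 - δ))) • u‖ ^ p = ‖u‖ ^ (p * (1 - δ - p) / (1 - δ)) :=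
  stmt9_general p δ hp hδ0 hδ1 Φ hhom u hΦu hmin
end

section
/- Let 0 < δ < 1 < p. Suppose C > 0, u ∈ X a normed space, f ≥ 0 integrable on Ω, and that (i) ‖u‖^p = ∫_Ω u^{1−δ} f dx, and (ii) for every v ∈ X, ∫_Ω |v| u^{−δ} f dx ≤ C ‖u‖^{p−1} ‖v‖. Then for every v ∈ X, ∫_Ω |v|^{1−δ} f dx ≤ C^{1−δ} ‖u‖^{p+δ−1} ‖v‖^{1−δ}, and hence the Sobolev-type inequality C' (∫_Ω |v|^{1−δ} f dx)^{p/(1−δ)} ≤ ‖v‖^p holds for a suitable constant C' > 0. -/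
/-!
Write `|v|^(1-δ) f = (|v| u^(-δ) f)^(1-δ) (u^(1-δ) f)^δ` and apply Hölder's inequality with
exponents `1/(1-δ)` and `1/δ`: the first factor is controlled by (ii), the second equals
`‖u‖^p` by (i). The resulting bound `∫ |v|^(1-δ) f ≤ D ‖v‖^(1-δ)` becomes the Sobolev-type
inequality after raising both sides to the power `p/(1-δ)`.
-/

open MeasureTheory

namespace MeasureTheory

variable {α : Type*} [MeasurableSpace α] {μ : Measure α}

lemma Integrable.memLp_rpow_of_nonneg {g : α → ℝ} (hg : Integrable g μ) (hg0 : ∀ x, 0 ≤ g x)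
    {a : ℝ} (ha : 0 < a) : MemLp (fun x => g x ^ a) (ENNReal.ofReal (1 / a)) μ := by
  have := (memLp_one_iff_integrable.mpr hg).norm_rpow_div (ENNReal.ofReal a)
  rw [ENNReal.toReal_ofReal ha.le, one_div, ← ENNReal.ofReal_inv_of_pos ha] at this
  simpa only [Real.norm_of_nonneg (hg0 _), one_div] using this

theorem integral_rpow_mul_rpow_le {g h : α → ℝ} (hg : Integrable g μ) (hh : Integrable h μ)
    (hg0 : ∀ x, 0 ≤ g x) (hh0 : ∀ x, 0 ≤ h x) {a b : ℝ} (ha : 0 < a) (hb : 0 < b)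
    (hab : a + b = 1) :
    ∫ x, g x ^ a * h x ^ b ∂μ ≤ (∫ x, g x ∂μ) ^ a * (∫ x, h x ∂μ) ^ b := by
  have hconj : (1 / a).HolderConjugate (1 / b) := by
    rw [Real.holderConjugate_iff, one_div, one_div, inv_inv, inv_inv, one_lt_inv₀ ha]
    exact ⟨by linarith, hab⟩
  have hpow {k : α → ℝ} (hk0 : ∀ x, 0 ≤ k x) {c : ℝ} (hc : 0 < c) (x : α) :
      (k x ^ c) ^ (1 / c) = k x := by
    rw [← Real.rpow_mul (hk0 x), mul_one_div_cancel hc.ne', Real.rpow_one]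
  simpa only [hpow hg0 ha, hpow hh0 hb, one_div_one_div] using
    integral_mul_le_Lp_mul_Lq_of_nonneg hconj
      (.of_forall fun x => Real.rpow_nonneg (hg0 x) a)
      (.of_forall fun x => Real.rpow_nonneg (hh0 x) b)
      (hg.memLp_rpow_of_nonneg hg0 ha) (hh.memLp_rpow_of_nonneg hh0 hb)


end MeasureTheory

lemma rpow_one_sub_mul_eq_interpolation {δ t w c : ℝ} (ht : 0 ≤ t) (hw : 0 < w) (hc : 0 ≤ c) :
    (t * w ^ (-δ) * c) ^ (1 - δ) * (w ^ (1 - δ) * c) ^ δ = t ^ (1 - δ) * c := by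
  have hw' : ∀ r : ℝ, 0 ≤ w ^ r := fun r => Real.rpow_nonneg hw.le r
  rw [Real.mul_rpow (by positivity) hc, Real.mul_rpow ht (hw' _), Real.mul_rpow (hw' _) hc,
    ← Real.rpow_mul hw.le, ← Real.rpow_mul hw.le]
  calc t ^ (1 - δ) * w ^ (-δ * (1 - δ)) * c ^ (1 - δ) * (w ^ ((1 - δ) * δ) * c ^ δ)
      = t ^ (1 - δ) * (w ^ (-δ * (1 - δ)) * w ^ ((1 - δ) * δ)) * (c ^ (1 - δ) * c ^ δ) := by ring
    _ = t ^ (1 - δ) * c := by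
      rw [← Real.rpow_add hw, ← Real.rpow_add' hc (by norm_num),
        show -δ * (1 - δ) + (1 - δ) * δ = 0 by ring, sub_add_cancel, Real.rpow_zero,
        Real.rpow_one, mul_one]

section

variable {Ω : Type*} [MeasurableSpace Ω] {μ : Measure Ω}

theorem integral_abs_rpow_mul_le {δ : ℝ} (hδ0 : 0 < δ) (hδ1 : δ < 1) {f u v : Ω → ℝ}
    (hf0 : ∀ x, 0 ≤ f x) (hu0 : ∀ x, 0 < u x)
    (hvu : Integrable (fun x => |v x| * u x ^ (-δ) * f x) μ)
    (hu : Integrable (fun x => u x ^ (1 - δ) * f x) μ) :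
    ∫ x, |v x| ^ (1 - δ) * f x ∂μ ≤
      (∫ x, |v x| * u x ^ (-δ) * f x ∂μ) ^ (1 - δ) * (∫ x, u x ^ (1 - δ) * f x ∂μ) ^ δ := by
  have hsplit : (fun x => |v x| ^ (1 - δ) * f x) =
      fun x => (|v x| * u x ^ (-δ) * f x) ^ (1 - δ) * (u x ^ (1 - δ) * f x) ^ δ :=
    funext fun x => (rpow_one_sub_mul_eq_interpolation (abs_nonneg (v x)) (hu0 x) (hf0 x)).symm
  rw [hsplit]
  exact integral_rpow_mul_rpow_le hvu hu
    (fun x => mul_nonneg (mul_nonneg (abs_nonneg _) (Real.rpow_nonneg (hu0 x).le _)) (hf0 x))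
    (fun x => mul_nonneg (Real.rpow_nonneg (hu0 x).le _) (hf0 x)) (by linarith) hδ0 (by ring)

end

lemma exists_pos_mul_rpow_le_of_le_mul_rpow {D s q : ℝ} (hD : 0 ≤ D) (hs : 0 < s) (hq : 0 ≤ q) :
    ∃ K : ℝ, 0 < K ∧ ∀ I N : ℝ, 0 ≤ I → 0 ≤ N → I ≤ D * N ^ s → K * I ^ (q / s) ≤ N ^ q := by
  have hD1 : 0 < D + 1 := by linarith
  refine ⟨((D + 1) ^ (q / s))⁻¹, by positivity, fun I N hI hN hIN => ?_⟩
  rw [inv_mul_le_iff₀ (by positivity)]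
  calc I ^ (q / s) ≤ ((D + 1) * N ^ s) ^ (q / s) := by
        gcongr
        nlinarith [Real.rpow_nonneg hN s]
    _ = (D + 1) ^ (q / s) * N ^ q := by
        rw [Real.mul_rpow hD1.le (by positivity), ← Real.rpow_mul hN, mul_div_cancel₀ _ hs.ne']

lemma mul_rpow_one_sub_mul_rpow_rpow_eq {C A N p δ : ℝ} (hC : 0 ≤ C) (hA : 0 ≤ A) (hN : 0 ≤ N)
    (hpδ : p + δ - 1 ≠ 0) :
    (C * A ^ (p - 1) * N) ^ (1 - δ) * (A ^ p) ^ δ =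
      C ^ (1 - δ) * A ^ (p + δ - 1) * N ^ (1 - δ) := by
  rw [Real.mul_rpow (by positivity) hN, Real.mul_rpow hC (by positivity), ← Real.rpow_mul hA,
    ← Real.rpow_mul hA, show p + δ - 1 = (p - 1) * (1 - δ) + p * δ by ring,
    Real.rpow_add' hA (by convert hpδ using 1; ring)]
  ring

theorem stmt10_general {Ω : Type*} [MeasurableSpace Ω] (μ : Measure Ω) (p δ C : ℝ)
    (hδ0 : 0 < δ) (hδ1 : δ < 1) (hp : 1 < p) (hC : 0 < C)
    (f u : Ω → ℝ) (hf0 : ∀ x, 0 ≤ f x)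
    (hu0 : ∀ x, 0 < u x)
    (X : Set (Ω → ℝ)) (nrm : (Ω → ℝ) → ℝ) (hnrm : ∀ w, 0 ≤ nrm w)
    (hint1 : Integrable (fun x => u x ^ (1 - δ) * f x) μ)
    (h1 : nrm u ^ p = ∫ x, u x ^ (1 - δ) * f x ∂μ)
    (hint2 : ∀ v ∈ X, Integrable (fun x => |v x| * u x ^ (-δ) * f x) μ)
    (h2 : ∀ v ∈ X, ∫ x, |v x| * u x ^ (-δ) * f x ∂μ ≤ C * nrm u ^ (p - 1) * nrm v) :
    (∀ v ∈ X, ∫ x, |v x| ^ (1 - δ) * f x ∂μ ≤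
        C ^ (1 - δ) * nrm u ^ (p + δ - 1) * nrm v ^ (1 - δ)) ∧
      ∃ C' : ℝ, 0 < C' ∧ ∀ v ∈ X,
        C' * (∫ x, |v x| ^ (1 - δ) * f x ∂μ) ^ (p / (1 - δ)) ≤ nrm v ^ p := by
  have interpolation : ∀ v ∈ X, ∫ x, |v x| ^ (1 - δ) * f x ∂μ ≤
      C ^ (1 - δ) * nrm u ^ (p + δ - 1) * nrm v ^ (1 - δ) := fun v hv =>
    calc ∫ x, |v x| ^ (1 - δ) * f x ∂μ
        ≤ (∫ x, |v x| * u x ^ (-δ) * f x ∂μ) ^ (1 - δ) * (∫ x, u x ^ (1 - δ) * f x ∂μ) ^ δ :=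
          integral_abs_rpow_mul_le hδ0 hδ1 hf0 hu0 (hint2 v hv) hint1
      _ ≤ (C * nrm u ^ (p - 1) * nrm v) ^ (1 - δ) * (nrm u ^ p) ^ δ := by
          have := hnrm u
          rw [← h1]
          gcongr
          · exact integral_nonneg fun x =>
              mul_nonneg (mul_nonneg (abs_nonneg (v x)) (Real.rpow_nonneg (hu0 x).le _)) (hf0 x)
          · exact h2 v hv
      _ = C ^ (1 - δ) * nrm u ^ (p + δ - 1) * nrm v ^ (1 - δ) :=
          mul_rpow_one_sub_mul_rpow_rpow_eq hC.le (hnrm u) (hnrm v) (by linarith)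
  obtain ⟨K, hK, hKle⟩ := exists_pos_mul_rpow_le_of_le_mul_rpow
    (D := C ^ (1 - δ) * nrm u ^ (p + δ - 1)) (by have := hnrm u; positivity)
    (by linarith : 0 < 1 - δ) (by linarith : 0 ≤ p)
  refine ⟨interpolation, K, hK, fun v hv => hKle _ _ ?_ (hnrm v) ?_⟩
  · exact integral_nonneg fun x => mul_nonneg (Real.rpow_nonneg (abs_nonneg _) _) (hf0 x)
  · exact interpolation v hv

theorem stmt10 {Ω : Type*} [MeasurableSpace Ω] (μ : Measure Ω) (p δ C : ℝ)
    (hδ0 : 0 < δ) (hδ1 : δ < 1) (hp : 1 < p) (hC : 0 < C)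
    (f u : Ω → ℝ) (hf : Integrable f μ) (hf0 : ∀ x, 0 ≤ f x)
    (hu : Measurable u) (hu0 : ∀ x, 0 < u x)
    (X : Set (Ω → ℝ)) (nrm : (Ω → ℝ) → ℝ) (hnrm : ∀ w, 0 ≤ nrm w)
    (hXmeas : ∀ v ∈ X, Measurable v)
    (hint1 : Integrable (fun x => u x ^ (1 - δ) * f x) μ)
    (h1 : nrm u ^ p = ∫ x, u x ^ (1 - δ) * f x ∂μ)
    (hint2 : ∀ v ∈ X, Integrable (fun x => |v x| * u x ^ (-δ) * f x) μ)
    (h2 : ∀ v ∈ X, ∫ x, |v x| * u x ^ (-δ) * f x ∂μ ≤ C * nrm u ^ (p - 1) * nrm v) :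
    (∀ v ∈ X, ∫ x, |v x| ^ (1 - δ) * f x ∂μ ≤
        C ^ (1 - δ) * nrm u ^ (p + δ - 1) * nrm v ^ (1 - δ)) ∧
      ∃ C' : ℝ, 0 < C' ∧ ∀ v ∈ X,
        C' * (∫ x, |v x| ^ (1 - δ) * f x ∂μ) ^ (p / (1 - δ)) ≤ nrm v ^ p :=
  stmt10_general μ p δ C hδ0 hδ1 hp hC f u hf0 hu0 X nrm hnrm hint1 h1 hint2 h2
end

section
/- Let 1 < p < ∞ and μ > 0. Define the truncation T_μ : ℝ → ℝ by T_μ(s) = s if |s| ≤ μ and T_μ(s) = μ s/|s| otherwise. Let u_n, u : ℝ^N → ℝ with u ≥ u_n pointwise. Then for all x, y ∈ ℝ^N, (|u_n(x) − u_n(y)|^{p−2}(u_n(x) − u_n(y)) − |u(x) − u(y)|^{p−2}(u(x) − u(y))) · (T_μ((u_n − u)(x)) − T_μ((u_n − u)(y))) ≥ 0. -/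
/-!
Both factors are increasing functions evaluated at two points with the same difference:
`(un x - u x) - (un y - u y) = (un x - un y) - (u x - u y)`. The map `t ↦ |t| ^ (p - 2) * t`
is increasing (it is odd and equals `t ^ (p - 1)` for `t ≥ 0`) and the truncation is the clamp
to `[-μ, μ]`, so the two differences always have the same sign.
-/

lemma abs_rpow_sub_two_mul_self_of_nonneg {p t : ℝ} (hp : 1 < p) (ht : 0 ≤ t) :
    |t| ^ (p - 2) * t = t ^ (p - 1) := by
  rcases ht.eq_or_lt with rfl | ht
  · simp [Real.zero_rpow (by linarith : p - 1 ≠ 0)]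
  · rw [abs_of_pos ht, ← Real.rpow_add_one ht.ne']
    ring_nf

lemma monotone_abs_rpow_sub_two_mul_self {p : ℝ} (hp : 1 < p) :
    Monotone fun t : ℝ => |t| ^ (p - 2) * t := by
  refine monotone_of_odd_of_monotoneOn_nonneg (fun t => by simp) ?_
  intro s hs t ht hst
  simp only [abs_rpow_sub_two_mul_self_of_nonneg hp hs, abs_rpow_sub_two_mul_self_of_nonneg hp ht]
  exact Real.rpow_le_rpow hs hst (by linarith)

lemma ite_abs_le_eq_max_min {μ : ℝ} (hμ : 0 ≤ μ) (s : ℝ) :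
    (if |s| ≤ μ then s else μ * s / |s|) = max (-μ) (min s μ) := by
  split_ifs with h
  · rw [abs_le] at h
    rw [min_eq_left h.2, max_eq_right h.1]
  · rw [not_le] at h
    rcases le_total 0 s with hs | hs
    · rw [abs_of_nonneg hs] at h ⊢
      rw [mul_div_cancel_right₀ μ (by linarith), min_eq_right h.le, max_eq_right (by linarith)]
    · rw [abs_of_nonpos hs] at h ⊢
      rw [mul_div_assoc, div_neg, div_self (by linarith), mul_neg_one, min_eq_left (by linarith),
        max_eq_left (by linarith)]

lemma mul_sub_nonneg_of_monotone {f g : ℝ → ℝ} (hf : Monotone f) (hg : Monotone g)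
    {a b c d : ℝ} (h : a - b = c - d) : 0 ≤ (f a - f b) * (g c - g d) := by
  rcases le_total a b with hab | hab
  · exact mul_nonneg_of_nonpos_of_nonpos (sub_nonpos.2 (hf hab)) (sub_nonpos.2 (hg (by linarith)))
  · exact mul_nonneg (sub_nonneg.2 (hf hab)) (sub_nonneg.2 (hg (by linarith)))

theorem stmt11_general (p μ : ℝ) (hp : 1 < p) (hμ : 0 < μ) (N : ℕ)
    (un u : (Fin N → ℝ) → ℝ)
    (T : ℝ → ℝ) (hT : ∀ s : ℝ, T s = if |s| ≤ μ then s else μ * s / |s|) :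
    ∀ x y : Fin N → ℝ,
      0 ≤ (|un x - un y| ^ (p - 2) * (un x - un y) -
            |u x - u y| ^ (p - 2) * (u x - u y)) *
          (T (un x - u x) - T (un y - u y)) := by
  have hT_mono : Monotone T := by
    have : T = fun s => max (-μ) (min s μ) :=
      funext fun s => (hT s).trans (ite_abs_le_eq_max_min hμ.le s)
    exact this ▸ monotone_const.max (monotone_id.min monotone_const)
  intro x y
  exact mul_sub_nonneg_of_monotone (monotone_abs_rpow_sub_two_mul_self hp) hT_mono (by ring)

theorem stmt11 (p μ : ℝ) (hp : 1 < p) (hμ : 0 < μ) (N : ℕ)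
    (un u : (Fin N → ℝ) → ℝ) (hle : ∀ z, un z ≤ u z)
    (T : ℝ → ℝ) (hT : ∀ s : ℝ, T s = if |s| ≤ μ then s else μ * s / |s|) :
    ∀ x y : Fin N → ℝ,
      0 ≤ (|un x - un y| ^ (p - 2) * (un x - un y) -
            |u x - u y| ^ (p - 2) * (u x - u y)) *
          (T (un x - u x) - T (un y - u y)) :=
  stmt11_general p μ hp hμ N un u T hT
end
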